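/- Let u : ℝ × ℝ → ℝ be smooth with m = u − u_{xx} satisfying m_t + ∂ₓ[sin(u² − u_x²)·m] = 0, and suppose that for every t the functions u(t,·), u_x(t,·), u_{xx}(t,·), u_{xxx}(t,·), u_t(t,·), u_{tx}(t,·), u_{txx}(t,·) are bounded on ℝ. Set M = cos(u² − u_x²)·m·u_x. Then for all (t,x): u_t + sin(u² − u_x²)·u_x = −2·p*(u·M) − 2·[p₋*(u_x·M) − p₊*(u_x·M)], and u_{tx} + sin(u² − u_x²)·u_{xx} = −2·[p₋*(u·M) − p₊*(u·M)] − 2·p*(u_x·M), where the convolutions are taken in the x-variable for each fixed t. -/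

import Mathlib

open MeasureTheory Real Set

/-- The convolution `(p*f)(x) = ∫_ℝ (1/2) e^{-|x-y|} f(y) dy` with `p(x) = (1/2)exp(-|x|)`. -/
noncomputable def pConv (f : ℝ → ℝ) (x : ℝ) : ℝ := ∫ y : ℝ, (1/2) * Real.exp (-|x - y|) * f y

/-- `(p₊*f)(x) = (1/2)∫_{-∞}^{x} e^{y-x} f(y) dy`. -/
noncomputable def pPlus (f : ℝ → ℝ) (x : ℝ) : ℝ := (1/2) * ∫ y in Set.Iic x, Real.exp (y - x) * f y

/-- `(p₋*f)(x) = (1/2)∫_{x}^{∞} e^{x-y} f(y) dy`. -/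
noncomputable def pMinus (f : ℝ → ℝ) (x : ℝ) : ℝ := (1/2) * ∫ y in Set.Ici x, Real.exp (x - y) * f y

/-- Spatial partial derivative `∂ₓ` of a function of `(t, x)`. -/
noncomputable def pdx (f : ℝ → ℝ → ℝ) : ℝ → ℝ → ℝ := fun t x => deriv (fun y => f t y) x

/-- Time partial derivative `∂ₜ` of a function of `(t, x)`. -/
noncomputable def pdt (f : ℝ → ℝ → ℝ) : ℝ → ℝ → ℝ := fun t x => deriv (fun s => f s x) t

/-- The momentum density `m = u - u_{xx}`. -/
noncomputable def mF (u : ℝ → ℝ → ℝ) : ℝ → ℝ → ℝ := fun t x => u t x - pdx (pdx u) t x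

/-- The blow-up quantity `M = cos(u² - u_x²) · m · u_x`. -/
noncomputable def MF (u : ℝ → ℝ → ℝ) : ℝ → ℝ → ℝ :=
  fun t x => Real.cos ((u t x) ^ 2 - (pdx u t x) ^ 2) * mF u t x * pdx u t x

/-!
Set `v = u_t + sin(u² - u_x²) u_x` and `w = u_tx + sin(u² - u_x²) u_xx`. Because
`(u² - u_x²)_x = 2 u_x m`, one has `v_x = w + 2 u_x M`, and the equation (with `u_txx = u_xxt`)
is exactly `w_x = v + 2 u M`. Hence `φ = v - w` and `ψ = v + w` are bounded solutions of
`φ' + φ = 2 (u_x M - u M)` and `ψ' - ψ = 2 (u M + u_x M)`; integrating against `e^{±(y - x)}`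
gives `φ = 2 p₊ * (φ' + φ)` and `ψ = 2 p₋ * (ψ - ψ')`. Taking `(ψ ± φ) / 2` and using
`p = p₊ + p₋` yields both identities.
-/

open Filter Topology Function
open scoped ContDiff

section HalfLineKernels

variable {f g : ℝ → ℝ} {K L : ℝ}

lemma integrableOn_Iic_exp_sub_mul (x : ℝ) (hf : Continuous f) (hK : ∀ y, |f y| ≤ K) :
    IntegrableOn (fun y => exp (y - x) * f y) (Iic x) := by
  have hexp : IntegrableOn (fun y => exp (y - x)) (Iic x) := by
    simp_rw [exp_sub, div_eq_mul_inv]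
    exact (integrableOn_exp_Iic x).mul_const _
  exact hexp.mul_bdd hf.aestronglyMeasurable (ae_of_all _ hK)

lemma integrableOn_Ici_exp_sub_mul (x : ℝ) (hf : Continuous f) (hK : ∀ y, |f y| ≤ K) :
    IntegrableOn (fun y => exp (x - y) * f y) (Ici x) := by
  have hexp : IntegrableOn (fun y => exp (x - y)) (Ioi x) := by
    have : (fun y => exp (x - y)) = fun y => exp x * exp (-1 * y) := by
      ext y; rw [← exp_add]; ring_nf
    rw [this]
    exact (exp_neg_integrableOn_Ioi x one_pos).const_mul _
  rw [integrableOn_Ici_iff_integrableOn_Ioi]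
  exact hexp.mul_bdd hf.aestronglyMeasurable (ae_of_all _ hK)

lemma pPlus_const_mul (c : ℝ) (f : ℝ → ℝ) (x : ℝ) :
    pPlus (fun y => c * f y) x = c * pPlus f x := by
  simp only [pPlus, mul_left_comm _ c, integral_const_mul]

lemma pMinus_const_mul (c : ℝ) (f : ℝ → ℝ) (x : ℝ) :
    pMinus (fun y => c * f y) x = c * pMinus f x := by
  simp only [pMinus, mul_left_comm _ c, integral_const_mul]

lemma pPlus_sub (x : ℝ) (hf : Continuous f) (hK : ∀ y, |f y| ≤ K) (hg : Continuous g)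
    (hL : ∀ y, |g y| ≤ L) : pPlus (fun y => f y - g y) x = pPlus f x - pPlus g x := by
  simp only [pPlus, mul_sub]
  rw [integral_sub (integrableOn_Iic_exp_sub_mul x hf hK) (integrableOn_Iic_exp_sub_mul x hg hL),
    mul_sub]

lemma pMinus_add (x : ℝ) (hf : Continuous f) (hK : ∀ y, |f y| ≤ K) (hg : Continuous g)
    (hL : ∀ y, |g y| ≤ L) : pMinus (fun y => f y + g y) x = pMinus f x + pMinus g x := by
  simp only [pMinus, mul_add]
  rw [integral_add (integrableOn_Ici_exp_sub_mul x hf hK) (integrableOn_Ici_exp_sub_mul x hg hL),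
    mul_add]

lemma pConv_eq_pPlus_add_pMinus (x : ℝ) (hf : Continuous f) (hK : ∀ y, |f y| ≤ K) :
    pConv f x = pPlus f x + pMinus f x := by
  have hIic : EqOn (fun y => 1 / 2 * exp (-|x - y|) * f y) (fun y => 1 / 2 * (exp (y - x) * f y))
      (Iic x) := fun y hy => by
    simp only [abs_of_nonneg (sub_nonneg.2 (mem_Iic.1 hy)), neg_sub]; ring
  have hIoi : EqOn (fun y => 1 / 2 * exp (-|x - y|) * f y) (fun y => 1 / 2 * (exp (x - y) * f y))
      (Ioi x) := fun y hy => by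
    simp only [abs_of_neg (sub_neg.2 (mem_Ioi.1 hy)), neg_neg]; ring
  have hint := (integrableOn_Iic_exp_sub_mul x hf hK).const_mul (1 / 2)
  have hint' := ((integrableOn_Ici_exp_sub_mul x hf hK).mono_set Ioi_subset_Ici_self).const_mul
    (1 / 2)
  rw [pConv, ← intervalIntegral.integral_Iic_add_Ioi
      (IntegrableOn.congr_fun hint hIic.symm measurableSet_Iic)
      (IntegrableOn.congr_fun hint' hIoi.symm measurableSet_Ioi),
    setIntegral_congr_fun measurableSet_Iic hIic, setIntegral_congr_fun measurableSet_Ioi hIoi,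
    integral_const_mul, integral_const_mul, ← integral_Ici_eq_integral_Ioi, pPlus, pMinus]

lemma eq_two_mul_pPlus_of_hasDerivAt {φ h : ℝ → ℝ} {C : ℝ}
    (hφ : ∀ y, HasDerivAt φ (h y - φ y) y) (hφC : ∀ y, |φ y| ≤ C)
    (hh : Continuous h) (hK : ∀ y, |h y| ≤ K) (x : ℝ) : φ x = 2 * pPlus h x := by
  have hderiv : ∀ y ∈ Iic x, HasDerivAt (fun y => exp (y - x) * φ y) (exp (y - x) * h y) y :=
    fun y _ => by
      refine (((hasDerivAt_id' y).sub_const x).exp.mul (hφ y)).congr_deriv ?_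
      ring
  have hlim : Tendsto (fun y => exp (y - x) * φ y) atBot (𝓝 0) :=
    (tendsto_exp_atBot.comp (tendsto_atBot_add_const_right _ (-x) tendsto_id))
      |>.zero_mul_isBoundedUnder_le (isBoundedUnder_of ⟨C, hφC⟩)
  have := integral_Iic_of_hasDerivAt_of_tendsto' hderiv (integrableOn_Iic_exp_sub_mul x hh hK) hlim
  simp only [sub_self, exp_zero, one_mul, sub_zero] at this
  rw [pPlus, this]; ring

lemma eq_two_mul_pMinus_of_hasDerivAt {φ h : ℝ → ℝ} {C : ℝ}
    (hφ : ∀ y, HasDerivAt φ (φ y - h y) y) (hφC : ∀ y, |φ y| ≤ C)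
    (hh : Continuous h) (hK : ∀ y, |h y| ≤ K) (x : ℝ) : φ x = 2 * pMinus h x := by
  have hderiv :
      ∀ y ∈ Ici x, HasDerivAt (fun y => exp (x - y) * φ y) (-(exp (x - y) * h y)) y :=
    fun y _ => by
      refine (((hasDerivAt_id' y).const_sub x).exp.mul (hφ y)).congr_deriv ?_
      ring
  have hlim : Tendsto (fun y => exp (x - y) * φ y) atTop (𝓝 0) :=
    (tendsto_exp_atBot.comp ((tendsto_atBot_add_const_left _ x tendsto_neg_atTop_atBot).congr
      fun y => (sub_eq_add_neg x y).symm)).zero_mul_isBoundedUnder_le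
      (isBoundedUnder_of ⟨C, hφC⟩)
  have := integral_Ioi_of_hasDerivAt_of_tendsto' hderiv
    ((integrableOn_Ici_exp_sub_mul x hh hK).mono_set Ioi_subset_Ici_self).neg hlim
  simp only [integral_neg, sub_self, exp_zero, one_mul, zero_sub, neg_inj] at this
  rw [pMinus, integral_Ici_eq_integral_Ioi, this]; ring

theorem eq_pConv_of_hasDerivAt_system {v w f g : ℝ → ℝ} {C : ℝ}
    (hv : ∀ y, HasDerivAt v (w y + 2 * g y) y) (hw : ∀ y, HasDerivAt w (v y + 2 * f y) y)
    (hvC : ∀ y, |v y| ≤ C) (hwC : ∀ y, |w y| ≤ C)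
    (hf : Continuous f) (hfK : ∀ y, |f y| ≤ K) (hg : Continuous g) (hgK : ∀ y, |g y| ≤ K)
    (x : ℝ) :
    v x = -2 * pConv f x - 2 * (pMinus g x - pPlus g x) ∧
      w x = -2 * (pMinus f x - pPlus f x) - 2 * pConv g x := by
  have hgf : ∀ y, |2 * (g y - f y)| ≤ 2 * (K + K) := fun y => by
    rw [abs_mul, abs_two]; gcongr
    exact (abs_sub _ _).trans (add_le_add (hgK y) (hfK y))
  have hfg : ∀ y, |-2 * (f y + g y)| ≤ 2 * (K + K) := fun y => by
    rw [abs_mul, abs_neg, abs_two]; gcongr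
    exact (abs_add_le _ _).trans (add_le_add (hfK y) (hgK y))
  have hdiff := eq_two_mul_pPlus_of_hasDerivAt (φ := fun y => v y - w y)
    (fun y => ((hv y).sub (hw y)).congr_deriv (by ring))
    (fun y => (abs_sub _ _).trans (add_le_add (hvC y) (hwC y))) (by fun_prop) hgf x
  have hsum := eq_two_mul_pMinus_of_hasDerivAt (φ := fun y => v y + w y)
    (fun y => ((hv y).add (hw y)).congr_deriv (by ring))
    (fun y => (abs_add_le _ _).trans (add_le_add (hvC y) (hwC y))) (by fun_prop) hfg x
  rw [pPlus_const_mul, pPlus_sub x hg hgK hf hfK] at hdiff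
  rw [pMinus_const_mul, pMinus_add x hf hfK hg hgK] at hsum
  rw [pConv_eq_pPlus_add_pMinus x hf hfK, pConv_eq_pPlus_add_pMinus x hg hgK]
  constructor
  · linear_combination (hsum + hdiff) / 2
  · linear_combination (hsum - hdiff) / 2

end HalfLineKernels

section PartialDerivatives

variable {F : ℝ → ℝ → ℝ}

lemma hasDerivAt_fderiv_uncurry_zero_one (hF : Differentiable ℝ (uncurry F)) (t x : ℝ) :
    HasDerivAt (F t) (fderiv ℝ (uncurry F) (t, x) (0, 1)) x :=
  (hF (t, x)).hasFDerivAt.comp_hasDerivAt (f := fun y => (t, y)) x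
    ((hasDerivAt_const x t).prodMk (hasDerivAt_id x))

lemma hasDerivAt_fderiv_uncurry_one_zero (hF : Differentiable ℝ (uncurry F)) (t x : ℝ) :
    HasDerivAt (F · x) (fderiv ℝ (uncurry F) (t, x) (1, 0)) t :=
  (hF (t, x)).hasFDerivAt.comp_hasDerivAt (f := fun s => (s, x)) t
    ((hasDerivAt_id t).prodMk (hasDerivAt_const t x))

lemma uncurry_pdx (hF : Differentiable ℝ (uncurry F)) :
    uncurry (pdx F) = fun p => fderiv ℝ (uncurry F) p (0, 1) :=
  funext fun p => (hasDerivAt_fderiv_uncurry_zero_one hF p.1 p.2).deriv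

lemma uncurry_pdt (hF : Differentiable ℝ (uncurry F)) :
    uncurry (pdt F) = fun p => fderiv ℝ (uncurry F) p (1, 0) :=
  funext fun p => (hasDerivAt_fderiv_uncurry_one_zero hF p.1 p.2).deriv

lemma hasDerivAt_pdx (hF : Differentiable ℝ (uncurry F)) (t x : ℝ) :
    HasDerivAt (F t) (pdx F t x) x :=
  (hasDerivAt_fderiv_uncurry_zero_one hF t x).differentiableAt.hasDerivAt

lemma hasDerivAt_pdt (hF : Differentiable ℝ (uncurry F)) (t x : ℝ) :
    HasDerivAt (F · x) (pdt F t x) t :=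
  (hasDerivAt_fderiv_uncurry_one_zero hF t x).differentiableAt.hasDerivAt

lemma ContDiff.uncurry_pdx (hF : ContDiff ℝ ∞ (uncurry F)) :
    ContDiff ℝ ∞ (uncurry (pdx F)) := by
  rw [_root_.uncurry_pdx (hF.differentiable (by simp))]
  exact (hF.fderiv_right le_rfl).clm_apply contDiff_const

lemma ContDiff.uncurry_pdt (hF : ContDiff ℝ ∞ (uncurry F)) :
    ContDiff ℝ ∞ (uncurry (pdt F)) := by
  rw [_root_.uncurry_pdt (hF.differentiable (by simp))]
  exact (hF.fderiv_right le_rfl).clm_apply contDiff_const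

lemma pdt_pdx (hF : ContDiff ℝ 2 (uncurry F)) : pdt (pdx F) = pdx (pdt F) := by
  have hF' : Differentiable ℝ (fderiv ℝ (uncurry F)) :=
    (hF.fderiv_right (m := 1) (by norm_num)).differentiable (by norm_num)
  have hdiff (v : ℝ × ℝ) : Differentiable ℝ fun p => fderiv ℝ (uncurry F) p v :=
    fun p => (hF' p).clm_apply (differentiableAt_const v)
  have hF₁ : Differentiable ℝ (uncurry F) := hF.differentiable (by norm_num)
  have hfderiv_apply (v w p : ℝ × ℝ) :
      fderiv ℝ (fun q => fderiv ℝ (uncurry F) q v) p w =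
        fderiv ℝ (fderiv ℝ (uncurry F)) p w v := by
    rw [fderiv_clm_apply (hF' p) (differentiableAt_const v)]
    simp
  ext t x
  have h₁ := congrFun (uncurry_pdt (F := pdx F) (uncurry_pdx hF₁ ▸ hdiff _)) (t, x)
  have h₂ := congrFun (uncurry_pdx (F := pdt F) (uncurry_pdt hF₁ ▸ hdiff _)) (t, x)
  simp only [uncurry_apply_pair, uncurry_pdx hF₁, uncurry_pdt hF₁] at h₁ h₂
  rw [h₁, h₂, hfderiv_apply, hfderiv_apply,
    (hF.contDiffAt (x := (t, x))).isSymmSndFDerivAt (by simp)]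

end PartialDerivatives

lemma abs_add_sin_mul_le {a b θ C : ℝ} (ha : |a| ≤ C) (hb : |b| ≤ C) :
    |a + sin θ * b| ≤ C + C :=
  (abs_add_le _ _).trans <| add_le_add ha <| by
    rw [abs_mul]; exact (mul_le_of_le_one_left (abs_nonneg _) (abs_sin_le_one θ)).trans hb

section SineMCH

variable {u : ℝ → ℝ → ℝ}

lemma hasDerivAt_sin_mul_mF (hu : ContDiff ℝ ∞ (uncurry u)) (t y : ℝ) :
    HasDerivAt (fun y => sin (u t y ^ 2 - pdx u t y ^ 2) * mF u t y)
      (cos (u t y ^ 2 - pdx u t y ^ 2) * (2 * pdx u t y * mF u t y) * mF u t y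
        + sin (u t y ^ 2 - pdx u t y ^ 2) * (pdx u t y - pdx (pdx (pdx u)) t y)) y := by
  have h₀ := hasDerivAt_pdx (hu.differentiable (by simp)) t y
  have h₁ := hasDerivAt_pdx (hu.uncurry_pdx.differentiable (by simp)) t y
  have h₂ := hasDerivAt_pdx (hu.uncurry_pdx.uncurry_pdx.differentiable (by simp)) t y
  have hphase := (h₀.fun_pow 2).fun_sub (h₁.fun_pow 2)
  refine (hphase.sin.fun_mul (h₀.fun_sub h₂)).congr_deriv ?_
  simp only [mF]
  ring

lemma hasDerivAt_pdt_add_sin_mul_pdx (hu : ContDiff ℝ ∞ (uncurry u)) (t y : ℝ) :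
    HasDerivAt (fun y => pdt u t y + sin (u t y ^ 2 - pdx u t y ^ 2) * pdx u t y)
      (pdx (pdt u) t y + sin (u t y ^ 2 - pdx u t y ^ 2) * pdx (pdx u) t y
        + 2 * (pdx u t y * MF u t y)) y := by
  have h₀ := hasDerivAt_pdx (hu.differentiable (by simp)) t y
  have h₁ := hasDerivAt_pdx (hu.uncurry_pdx.differentiable (by simp)) t y
  have ht := hasDerivAt_pdx (hu.uncurry_pdt.differentiable (by simp)) t y
  refine (ht.fun_add (((h₀.fun_pow 2).fun_sub (h₁.fun_pow 2)).sin.fun_mul h₁)).congr_deriv ?_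
  simp only [MF, mF]
  ring

lemma pdt_mF (hu : ContDiff ℝ ∞ (uncurry u)) (t y : ℝ) :
    pdt (mF u) t y = pdt u t y - pdx (pdx (pdt u)) t y := by
  have h₀ := hasDerivAt_pdt (hu.differentiable (by simp)) t y
  have h₂ := hasDerivAt_pdt (hu.uncurry_pdx.uncurry_pdx.differentiable (by simp)) t y
  rw [pdt, show (fun s => mF u s y) = fun s => u s y - pdx (pdx u) s y from rfl,
    (h₀.fun_sub h₂).deriv, pdt_pdx (hu.uncurry_pdx.of_le (by norm_cast)),
    pdt_pdx (hu.of_le (by norm_cast))]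

lemma hasDerivAt_pdx_pdt_add_sin_mul_pdx_pdx (hu : ContDiff ℝ ∞ (uncurry u))
    {t : ℝ} (heq : ∀ y, pdt (mF u) t y
      + pdx (fun s y => sin (u s y ^ 2 - pdx u s y ^ 2) * mF u s y) t y = 0) (y : ℝ) :
    HasDerivAt (fun y => pdx (pdt u) t y + sin (u t y ^ 2 - pdx u t y ^ 2) * pdx (pdx u) t y)
      (pdt u t y + sin (u t y ^ 2 - pdx u t y ^ 2) * pdx u t y + 2 * (u t y * MF u t y)) y := by
  have h₀ := hasDerivAt_pdx (hu.differentiable (by simp)) t y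
  have h₁ := hasDerivAt_pdx (hu.uncurry_pdx.differentiable (by simp)) t y
  have h₂ := hasDerivAt_pdx (hu.uncurry_pdx.uncurry_pdx.differentiable (by simp)) t y
  have ht := hasDerivAt_pdx (hu.uncurry_pdt.uncurry_pdx.differentiable (by simp)) t y
  have hflux : pdx (fun s y => sin (u s y ^ 2 - pdx u s y ^ 2) * mF u s y) t y = _ :=
    (hasDerivAt_sin_mul_mF hu t y).deriv
  have hpde := heq y
  rw [pdt_mF hu, hflux] at hpde
  refine (ht.fun_add (((h₀.fun_pow 2).fun_sub (h₁.fun_pow 2)).sin.fun_mul h₂)).congr_deriv ?_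
  simp only [MF, mF] at hpde ⊢
  linear_combination -hpde

lemma abs_MF_le {t y C : ℝ} (h₀ : |u t y| ≤ C) (h₁ : |pdx u t y| ≤ C)
    (h₂ : |pdx (pdx u) t y| ≤ C) : |MF u t y| ≤ 2 * C ^ 2 := by
  have hm : |mF u t y| ≤ 2 * C := (abs_sub _ _).trans (by linarith)
  have hC : 0 ≤ C := (abs_nonneg _).trans h₀
  calc |MF u t y| = |cos (u t y ^ 2 - pdx u t y ^ 2)| * |mF u t y| * |pdx u t y| := by
        rw [MF, abs_mul, abs_mul]
    _ ≤ 1 * (2 * C) * C := by gcongr; exact abs_cos_le_one _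
    _ = 2 * C ^ 2 := by ring

lemma continuous_MF (hu : ContDiff ℝ ∞ (uncurry u)) (t : ℝ) : Continuous (MF u t) := by
  have h₀ := hu.continuous.uncurry_left t
  have h₁ := hu.uncurry_pdx.continuous.uncurry_left t
  have h₂ := hu.uncurry_pdx.uncurry_pdx.continuous.uncurry_left t
  unfold MF mF
  fun_prop

end SineMCH

theorem stmt8 (u : ℝ → ℝ → ℝ) (hu : ContDiff ℝ (⊤ : ℕ∞) (Function.uncurry u))
    (heq : ∀ t x : ℝ, pdt (mF u) t x
      + pdx (fun s y => Real.sin ((u s y) ^ 2 - (pdx u s y) ^ 2) * mF u s y) t x = 0)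
    (hb : ∀ t : ℝ, ∃ C : ℝ, ∀ x : ℝ,
      |u t x| ≤ C ∧ |pdx u t x| ≤ C ∧ |pdx (pdx u) t x| ≤ C ∧ |pdx (pdx (pdx u)) t x| ≤ C ∧
      |pdt u t x| ≤ C ∧ |pdt (pdx u) t x| ≤ C ∧ |pdt (pdx (pdx u)) t x| ≤ C) :
    ∀ t x : ℝ,
      (pdt u t x + Real.sin ((u t x) ^ 2 - (pdx u t x) ^ 2) * pdx u t x
        = -2 * pConv (fun y => u t y * MF u t y) x
          - 2 * (pMinus (fun y => pdx u t y * MF u t y) x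
                  - pPlus (fun y => pdx u t y * MF u t y) x)) ∧
      (pdx (pdt u) t x + Real.sin ((u t x) ^ 2 - (pdx u t x) ^ 2) * pdx (pdx u) t x
        = -2 * (pMinus (fun y => u t y * MF u t y) x
                  - pPlus (fun y => u t y * MF u t y) x)
          - 2 * pConv (fun y => pdx u t y * MF u t y) x) := by
  intro t x
  obtain ⟨C, hC⟩ := hb t
  have hMF (y : ℝ) : |MF u t y| ≤ 2 * C ^ 2 := abs_MF_le (hC y).1 (hC y).2.1 (hC y).2.2.1
  have hu_cont := hu.continuous.uncurry_left t
  have hux_cont := hu.uncurry_pdx.continuous.uncurry_left t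
  have hM_cont := continuous_MF hu t
  refine eq_pConv_of_hasDerivAt_system (hasDerivAt_pdt_add_sin_mul_pdx hu t)
    (hasDerivAt_pdx_pdt_add_sin_mul_pdx_pdx hu (heq t))
    (fun y => abs_add_sin_mul_le (hC y).2.2.2.2.1 (hC y).2.1)
    (fun y => abs_add_sin_mul_le ?_ (hC y).2.2.1) (by fun_prop)
    (fun y => norm_mul_le_of_le (a₁ := u t y) (a₂ := MF u t y) (hC y).1 (hMF y)) (by fun_prop)
    (fun y => norm_mul_le_of_le (a₁ := pdx u t y) (a₂ := MF u t y) (hC y).2.1 (hMF y)) x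
  rw [← pdt_pdx (hu.of_le (by norm_cast))]
  exact (hC y).2.2.2.2.2.1
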